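/- arXiv:0905.0299 — 11 statements merged into one kernel-verified Lean document; each statement's English description precedes it below -/
import Mathlib

section
/- Let C be a category, J a Grothendieck topology on C, S a sieve on an object c, and for each arrow f : d ⟶ c in S let T_f be a sieve on d. Then the J-closure of the composite sieve S ∗ T equals the J-closure of the composite sieve S ∗ (close_J ∘ T), i.e. close_J(S ∗ T) = close_J(S ∗ T'), where T' assigns to each f in S the J-closure close_J(T_f). -/
open CategoryTheory

/-- The `J`-closure of a composite (bind) of sieves equals the `J`-closure of the composite
where each of the bound sieves has been replaced by its `J`-closure. -/
theorem close_bind_eq_close_bind_close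
    {C : Type u} [Category.{v} C] (J : GrothendieckTopology C) {c : C} (S : Sieve c)
    (T : ∀ ⦃d : C⦄ ⦃f : d ⟶ c⦄, S.arrows f → Sieve d) :
    J.close (Sieve.bind S.arrows T) =
      J.close (Sieve.bind S.arrows fun _ _ hf => J.close (T hf)) := by
  apply le_antisymm
  · apply J.monotone_close
    intro d g hg
    obtain ⟨e, h, f, hf, hh, rfl⟩ := hg
    exact ⟨e, h, f, hf, J.le_close _ _ hh, rfl⟩
  · apply J.le_close_of_isClosed _ (J.close_isClosed _)
    intro d g hg
    obtain ⟨e, h, f, hf, hh, rfl⟩ := hg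
    -- hh : J.close (T hf) h, i.e. J covers pullback of T hf along h
    apply J.superset_covering _ hh
    intro d' k hk
    exact ⟨_, k ≫ h, f, hf, hk, by simp⟩
end

section
/- Let C be a category with strong epi–mono factorizations and let J be a Grothendieck topology on C whose covering sieves are exactly the sieves containing a strong epimorphism (i.e., for every object c and sieve S on c, S ∈ J(c) if and only if there is a strong epimorphism with codomain c belonging to S). Then for every sieve R on an object c, the J-closure of R is the sieve of all morphisms f : d ⟶ c such that f factors through image.ι(r) for some morphism r belonging to R; that is, close_J(R) = {f : d ⟶ c | ∃ r ∈ R, f factors through the image monomorphism of r}. -/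
open CategoryTheory CategoryTheory.Limits

/-- The sieve on `c` of all morphisms factoring through the image monomorphism `image.ι r`
of some morphism `r` belonging to the sieve `R`. -/
def imagesSieve {C : Type u} [Category.{v} C] [HasImages C] {c : C} (R : Sieve c) :
    Sieve c where
  arrows d g := ∃ (e : C) (r : e ⟶ c), R.arrows r ∧ ∃ h : d ⟶ image r, g = h ≫ image.ι r
  downward_closed := by
    rintro d d' g ⟨e, r, hr, h, rfl⟩ k
    exact ⟨e, r, hr, k ≫ h, by simp⟩

/-- If `C` has strong epi–mono factorizations and the `J`-covering sieves are exactly the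
sieves containing a strong epimorphism, then the `J`-closure of a sieve `R` is the sieve of
morphisms factoring through the image of some morphism of `R`. -/
theorem close_eq_imagesSieve
    {C : Type u} [Category.{v} C] [HasStrongEpiMonoFactorisations C]
    (J : GrothendieckTopology C)
    (hJ : ∀ (c : C) (S : Sieve c),
      S ∈ J c ↔ ∃ (d : C) (e : d ⟶ c), StrongEpi e ∧ S.arrows e)
    (c : C) (R : Sieve c) :
    J.close R = imagesSieve R := by
  ext d f
  constructor
  · intro hf
    obtain ⟨a, e, he, hre⟩ := (hJ d (R.pullback f)).1 hf
    have hr : R.arrows (e ≫ f) := hre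
    have sq : CommSq (factorThruImage (e ≫ f)) e (image.ι (e ≫ f)) f :=
      ⟨by simp⟩
    exact ⟨a, e ≫ f, hr, sq.lift, (sq.fac_right).symm⟩
  · rintro ⟨a, r, hr, h, rfl⟩
    have hS : Sieve.generate (Presieve.singleton (factorThruImage r)) ∈ J (image r) := by
      refine (hJ _ _).2 ⟨a, factorThruImage r, inferInstance, ?_⟩
      exact ⟨a, 𝟙 a, factorThruImage r, Presieve.singleton.mk, by simp⟩
    have hpull := J.pullback_stable h hS
    refine J.superset_covering ?_ hpull
    rintro d' g ⟨Y, l, m, hm, hlm⟩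
    cases hm
    show R.arrows (g ≫ h ≫ image.ι r)
    rw [← Category.assoc, show g ≫ h = l ≫ factorThruImage r from hlm.symm]
    simpa using R.downward_closed hr l
end

section
/- Let C be a category with pullbacks, J a Grothendieck topology on C, m : x ⟶ c a monomorphism, and R the sieve on c generated by m. Let r : d ⟶ c be a morphism such that the pullback of r along any morphism f : b ⟶ c (i.e., the projection pullback(r, f) ⟶ b) is a strong epimorphism. Then R is J-closed if and only if the pullback sieve r*(R) is J-closed. -/
open CategoryTheory CategoryTheory.Limits

/-- Let `R` be the sieve generated by a monomorphism `m : x ⟶ c`, and let `r : d ⟶ c` be a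
morphism whose pullback along any morphism into `c` is a strong epimorphism. Then `R` is
`J`-closed if and only if the pullback sieve `r*(R)` is `J`-closed. -/
theorem isClosed_generate_mono_iff_isClosed_pullback
    {C : Type u} [Category.{v} C] [HasPullbacks C] (J : GrothendieckTopology C)
    {x c d : C} (m : x ⟶ c) [Mono m] (r : d ⟶ c)
    (hr : ∀ {b : C} (f : b ⟶ c), StrongEpi (pullback.snd r f)) :
    J.IsClosed (Sieve.generate (Presieve.singleton m)) ↔
      J.IsClosed ((Sieve.generate (Presieve.singleton m)).pullback r) := by
  constructor
  · exact J.isClosed_pullback r _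
  · intro hR b f hf
    haveI := hr f
    have hq : (Sieve.generate (Presieve.singleton m)).pullback r (pullback.fst r f) := by
      apply hR
      rw [GrothendieckTopology.covers_iff, ← Sieve.pullback_comp, pullback.condition,
        Sieve.pullback_comp]
      exact J.pullback_stable (pullback.snd r f) hf
    obtain ⟨y, g, h, hm, fac⟩ := hq
    cases hm
    have sq : CommSq g (pullback.snd r f) m f :=
      ⟨by rw [fac, pullback.condition]⟩
    exact ⟨x, sq.lift, m, Presieve.singleton.mk, sq.fac_right⟩
end

section
/- Let C be a category with strong epi–mono factorizations and let J be a Grothendieck topology on C such that for every strong epimorphism e the sieve generated by e is J-covering. Then a sieve R on an object c is J-closed if and only if for every monomorphism f : d ⟶ c with f*(R) ∈ J(d), one has f ∈ R. -/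
open CategoryTheory CategoryTheory.Limits

/-- If `C` has strong epi–mono factorizations and every strong epimorphism generates a
`J`-covering sieve, then a sieve `R` on `c` is `J`-closed if and only if every
monomorphism `f : d ⟶ c` whose pullback sieve `f*(R)` is `J`-covering belongs to `R`. -/
theorem isClosed_iff_forall_mono
    {C : Type u} [Category.{v} C] [HasStrongEpiMonoFactorisations C]
    (J : GrothendieckTopology C)
    (hJ : ∀ {d c : C} (e : d ⟶ c), StrongEpi e →
      Sieve.generate (Presieve.singleton e) ∈ J c)
    {c : C} (R : Sieve c) :
    J.IsClosed R ↔
      ∀ (d : C) (f : d ⟶ c), Mono f → R.pullback f ∈ J d → R.arrows f := by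
  constructor
  · intro h d f _ hf
    exact h f hf
  · intro h d f hf
    have he : StrongEpi (factorThruImage f) := inferInstance
    have hmem : R.pullback (image.ι f) ∈ J (image f) := by
      apply J.transitive (hJ (factorThruImage f) he)
      rintro Y g ⟨Z, k, e', ⟨⟩, rfl⟩
      simpa [← Sieve.pullback_comp, Category.assoc, image.fac f] using J.pullback_stable k hf
    have := h _ (image.ι f) inferInstance hmem
    simpa [image.fac f] using R.downward_closed this (factorThruImage f)
end

section
/- Let C be a category and let D be a pullback-stable family of sieves on C. Define, for each object c, Dˡ(c) to be the set of sieves S on c such that for every arrow f : d ⟶ c and every sieve Z on d, if Z ∈ D(d) and f*(S) ≤ Z then Z = ⊤. Then Dˡ is a Grothendieck topology on C. -/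
open CategoryTheory

/-- Given a pullback-stable family of sieves `D` on `C`, the assignment
`Dˡ(c) = {S | ∀ f : d ⟶ c, ∀ Z ∈ D(d), f*(S) ≤ Z → Z = ⊤}` is a Grothendieck topology. -/
theorem left_dual_is_grothendieck_topology
    {C : Type u} [Category.{v} C] (D : ∀ c : C, Set (Sieve c))
    (hD : ∀ {c d : C} (f : d ⟶ c) (S : Sieve c), S ∈ D c → S.pullback f ∈ D d) :
    ∃ K : GrothendieckTopology C, ∀ (c : C) (S : Sieve c),
      S ∈ K c ↔
        ∀ {d : C} (f : d ⟶ c) (Z : Sieve d), Z ∈ D d → S.pullback f ≤ Z → Z = ⊤ := by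
  refine ⟨{
    sieves := fun c => {S | ∀ {d : C} (f : d ⟶ c) (Z : Sieve d),
      Z ∈ D d → S.pullback f ≤ Z → Z = ⊤}
    top_mem' := ?_
    pullback_stable' := ?_
    transitive' := ?_ }, fun c S => Iff.rfl⟩
  · intro c d f Z _ hZ
    simpa using le_antisymm le_top (by simpa using hZ)
  · intro c d S f hS e g Z hZ hle
    refine hS (g ≫ f) Z hZ ?_
    rwa [Sieve.pullback_comp]
  · intro c S hS R hR d f Z hZ hle
    refine hS f Z hZ ?_
    intro e g hg
    have h1 := hR hg (𝟙 e) (Z.pullback g) (hD g Z hZ) ?_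
    · have : Z.pullback g (𝟙 e) := by rw [h1]; trivial
      simpa using this
    · intro x h hh
      simp only [Sieve.pullback_apply, Category.assoc] at hh ⊢
      exact hle _ (by simpa using hh)
end

section
/- Let C be a category and let D be a pullback-stable family of sieves on C. Define, for each object c, Dʳ(c) to be the set of sieves T on c such that for every arrow f : d ⟶ c and every sieve S on d, if S ∈ D(d) and S ≤ f*(T) then f ∈ T; and define (Dʳ)ˡ(c) to be the set of sieves S on c such that for every arrow f : d ⟶ c and every sieve Z on d, if Z ∈ Dʳ(d) and f*(S) ≤ Z then Z = ⊤. Then Dʳ is a pullback-stable family of sieves, (Dʳ)ˡ is a Grothendieck topology on C, and (Dʳ)ˡ is the smallest Grothendieck topology containing D: D(c) ⊆ (Dʳ)ˡ(c) for every object c, and for every Grothendieck topology K on C with D(c) ⊆ K(c) for all c, one has (Dʳ)ˡ(c) ⊆ K(c) for all c. -/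
open CategoryTheory

/-- The right dual `Dʳ` of a family of sieves `D`:
`Dʳ(c) = {T | ∀ f : d ⟶ c, ∀ S ∈ D(d), S ≤ f*(T) → f ∈ T}`. -/
def rightDual {C : Type u} [Category.{v} C] (D : ∀ c : C, Set (Sieve c)) (c : C) :
    Set (Sieve c) :=
  {T | ∀ {d : C} (f : d ⟶ c) (S : Sieve d), S ∈ D d → S ≤ T.pullback f → T.arrows f}

/-- The left dual `Dˡ` of a family of sieves `D`:
`Dˡ(c) = {S | ∀ f : d ⟶ c, ∀ Z ∈ D(d), f*(S) ≤ Z → Z = ⊤}`. -/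
def leftDual {C : Type u} [Category.{v} C] (D : ∀ c : C, Set (Sieve c)) (c : C) :
    Set (Sieve c) :=
  {S | ∀ {d : C} (f : d ⟶ c) (Z : Sieve d), Z ∈ D d → S.pullback f ≤ Z → Z = ⊤}

/-!
`(Dʳ)ˡ` is closed under the topology axioms for formal reasons: `leftDual E` is a topology as
soon as `E` is pullback-stable, and `Dʳ` always is. It contains `D` because a member of `Dʳ`
containing a sieve of `D` must contain every arrow. For minimality, every `K`-closed sieve lies in
`Dʳ` when `D ⊆ K`; applied to the `K`-closure of `S ∈ (Dʳ)ˡ`, which contains `S`, this forces the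
closure to be `⊤`, i.e. `S ∈ K`.
-/

namespace CategoryTheory.Sieve

variable {C : Type u} [Category.{v} C]

def IsPullbackStableFamily (E : ∀ c : C, Set (Sieve c)) : Prop :=
  ∀ ⦃c d : C⦄ (f : d ⟶ c) ⦃S : Sieve c⦄, S ∈ E c → S.pullback f ∈ E d

section

variable {E : ∀ c : C, Set (Sieve c)}

theorem pullback_mem_rightDual {c d : C} {T : Sieve c} (hT : T ∈ rightDual E c) (f : d ⟶ c) :
    T.pullback f ∈ rightDual E d :=
  fun g S hS hle => hT (g ≫ f) S hS (by rwa [pullback_comp])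

theorem isPullbackStableFamily_rightDual (E : ∀ c : C, Set (Sieve c)) :
    IsPullbackStableFamily (rightDual E) :=
  fun _ _ f _ hT => pullback_mem_rightDual hT f

theorem pullback_mem_leftDual {c d : C} {S : Sieve c} (hS : S ∈ leftDual E c) (f : d ⟶ c) :
    S.pullback f ∈ leftDual E d :=
  fun g Z hZ hle => hS (g ≫ f) Z hZ (by rwa [pullback_comp])

theorem top_mem_leftDual (c : C) : (⊤ : Sieve c) ∈ leftDual E c :=
  fun f Z _ hle => top_unique (by rwa [pullback_top] at hle)

theorem eq_top_of_mem_leftDual_of_le {c : C} {S Z : Sieve c} (hS : S ∈ leftDual E c)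
    (hZ : Z ∈ E c) (hle : S ≤ Z) : Z = ⊤ :=
  hS (𝟙 c) Z hZ (by rwa [pullback_id])

theorem leftDual_transitive (hE : IsPullbackStableFamily E) {c : C} {S : Sieve c}
    (hS : S ∈ leftDual E c) (R : Sieve c)
    (hR : ∀ ⦃d : C⦄ ⦃f : d ⟶ c⦄, S f → R.pullback f ∈ leftDual E d) : R ∈ leftDual E c := by
  intro d f Z hZ hle
  refine hS f Z hZ fun e g hg => ?_
  have hRg : R.pullback (g ≫ f) ≤ Z.pullback g := by
    rw [pullback_comp]
    exact pullback_monotone g hle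
  rw [mem_iff_pullback_eq_top]
  exact eq_top_of_mem_leftDual_of_le (hR hg) (hE g hZ) hRg

theorem eq_top_of_mem_rightDual_of_le (hE : IsPullbackStableFamily E) {c : C} {S Z : Sieve c}
    (hZ : Z ∈ rightDual E c) (hS : S ∈ E c) (hle : S ≤ Z) : Z = ⊤ :=
  top_unique fun _ g _ => hZ g (S.pullback g) (hE g hS) (pullback_monotone g hle)

theorem mem_leftDual_rightDual (hE : IsPullbackStableFamily E) {c : C} {S : Sieve c}
    (hS : S ∈ E c) : S ∈ leftDual (rightDual E) c :=
  fun f _ hZ hle => eq_top_of_mem_rightDual_of_le hE hZ (hE f hS) hle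

theorem _root_.CategoryTheory.GrothendieckTopology.IsClosed.mem_rightDual
    {K : GrothendieckTopology C} (hEK : ∀ c, E c ⊆ K c) {c : C} {T : Sieve c}
    (hT : K.IsClosed T) : T ∈ rightDual E c :=
  fun f _ hS hle => hT f (K.superset_covering hle (hEK _ hS))

theorem mem_of_mem_leftDual_rightDual {K : GrothendieckTopology C} (hEK : ∀ c, E c ⊆ K c)
    {c : C} {S : Sieve c} (hS : S ∈ leftDual (rightDual E) c) : S ∈ K c :=
  (K.close_eq_top_iff_mem S).1 <|
    eq_top_of_mem_leftDual_of_le hS ((K.close_isClosed S).mem_rightDual hEK) (K.le_close S)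

end

def leftDualTopology (E : ∀ c : C, Set (Sieve c)) (hE : IsPullbackStableFamily E) :
    GrothendieckTopology C where
  sieves := leftDual E
  top_mem' := top_mem_leftDual
  pullback_stable' _ _ _ f hS := pullback_mem_leftDual hS f
  transitive' _ _ hS R hR := leftDual_transitive hE hS R hR

end CategoryTheory.Sieve

open CategoryTheory.Sieve in
/-- Given a pullback-stable family of sieves `D` on `C`, the family `Dʳ` is pullback-stable,
and `(Dʳ)ˡ` is a Grothendieck topology on `C`; moreover it is the smallest Grothendieck
topology containing `D`. -/
theorem rightDual_leftDual_is_generated_topology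
    {C : Type u} [Category.{v} C] (D : ∀ c : C, Set (Sieve c))
    (hD : ∀ {c d : C} (f : d ⟶ c) (S : Sieve c), S ∈ D c → S.pullback f ∈ D d) :
    (∀ {c d : C} (f : d ⟶ c) (T : Sieve c),
        T ∈ rightDual D c → T.pullback f ∈ rightDual D d) ∧
    ∃ K : GrothendieckTopology C,
      (∀ (c : C) (S : Sieve c), S ∈ K c ↔ S ∈ leftDual (rightDual D) c) ∧
      (∀ (c : C) (S : Sieve c), S ∈ D c → S ∈ K c) ∧
      (∀ K' : GrothendieckTopology C,
        (∀ (c : C) (S : Sieve c), S ∈ D c → S ∈ K' c) →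
        ∀ (c : C) (S : Sieve c), S ∈ K c → S ∈ K' c) := by
  have hD' : IsPullbackStableFamily D := fun _ _ f S hS => hD f S hS
  refine ⟨fun f _ hT => pullback_mem_rightDual hT f,
    leftDualTopology (rightDual D) (isPullbackStableFamily_rightDual D),
    fun _ _ => Iff.rfl, fun _ _ hS => mem_leftDual_rightDual hD' hS,
    fun _ hDK' _ _ hS => mem_of_mem_leftDual_rightDual hDK' hS⟩
end

section
/- Let C be a category and let J₁ and J₂ be Grothendieck topologies on C. Define, for each object c, (J₁ ⇒ J₂)(c) to be the set of sieves S on c such that for every arrow f : d ⟶ c and every sieve Z on d, if Z is J₁-covering, Z is J₂-closed, and f*(S) ≤ Z, then Z = ⊤. Then J₁ ⇒ J₂ is a Grothendieck topology on C, and for every Grothendieck topology K on C one has K ⊓ J₁ ≤ J₂ if and only if K ≤ J₁ ⇒ J₂ (so J₁ ⇒ J₂ is the Heyting implication in the lattice of Grothendieck topologies on C). -/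
open CategoryTheory

/-- The Heyting implication of Grothendieck topologies: the assignment sending `c` to the set
of sieves `S` on `c` such that every `J₁`-covering, `J₂`-closed sieve `Z` containing a
pullback of `S` is maximal, is a Grothendieck topology, and it is the Heyting implication
`J₁ ⇒ J₂` in the lattice of Grothendieck topologies on `C`. -/
theorem heyting_implication_of_grothendieck_topologies
    {C : Type u} [Category.{v} C] (J₁ J₂ : GrothendieckTopology C) :
    ∃ H : GrothendieckTopology C,
      (∀ (c : C) (S : Sieve c), S ∈ H c ↔
        ∀ {d : C} (f : d ⟶ c) (Z : Sieve d),
          Z ∈ J₁ d → J₂.IsClosed Z → S.pullback f ≤ Z → Z = ⊤) ∧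
      (∀ K : GrothendieckTopology C, K ⊓ J₁ ≤ J₂ ↔ K ≤ H) := by
  refine ⟨{
    sieves := fun c => { S | ∀ {d : C} (f : d ⟶ c) (Z : Sieve d),
      Z ∈ J₁ d → J₂.IsClosed Z → S.pullback f ≤ Z → Z = ⊤ }
    top_mem' := by
      intro c d f Z _ _ hle
      simpa using le_antisymm le_top (by simpa using hle)
    pullback_stable' := by
      intro c d S f hS e g Z hZ hcl hle
      exact hS (g ≫ f) Z hZ hcl (by rw [Sieve.pullback_comp]; exact hle)
    transitive' := by
      intro c S hS R hR d f Z hZ hcl hle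
      refine hS f Z hZ hcl ?_
      intro e g hg
      have h1 : (R.pullback (g ≫ f)) ≤ Z.pullback g := by
        rw [Sieve.pullback_comp]
        exact Sieve.pullback_monotone g hle
      have h2 := hR hg (𝟙 e) (Z.pullback g) (J₁.pullback_stable g hZ)
        (J₂.isClosed_pullback g Z hcl) (by simpa using h1)
      rw [← Sieve.id_mem_iff_eq_top] at h2
      simpa using h2 }, fun c S => Iff.rfl, ?_⟩
  intro K
  constructor
  · intro h
    rw [GrothendieckTopology.le_def]
    intro c S hS
    intro d f Z hZ hcl hle
    have hSK : S.pullback f ∈ K d := K.pullback_stable f hS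
    have hZK : Z ∈ K d := K.superset_covering hle hSK
    have hmem : Z ∈ (K ⊓ J₁) d := by
      rw [← sInf_pair, GrothendieckTopology.mem_sInf]
      rintro t (rfl | rfl) <;> simp_all
    have hZ2 : Z ∈ J₂ d := h d hmem
    rw [← Sieve.id_mem_iff_eq_top]
    exact hcl (𝟙 d) (by simpa [GrothendieckTopology.Covers] using hZ2)
  · intro h
    intro c S hS
    have hSK : S ∈ K c := GrothendieckTopology.le_def.mp inf_le_left c hS
    have hSJ : S ∈ J₁ c := GrothendieckTopology.le_def.mp inf_le_right c hS
    have hH : ∀ {d : C} (f : d ⟶ c) (Z : Sieve d),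
        Z ∈ J₁ d → J₂.IsClosed Z → S.pullback f ≤ Z → Z = ⊤ :=
      GrothendieckTopology.le_def.mp h c hSK
    have := hH (𝟙 c) (J₂.close S) (J₁.superset_covering (J₂.le_close S) hSJ)
      (J₂.close_isClosed S) (by simpa using J₂.le_close S)
    rwa [GrothendieckTopology.close_eq_top_iff_mem] at this
end

section
/- Let C be a category, J a Grothendieck topology on C, and P a class of objects of C such that e ∈ P whenever there exists some morphism e ⟶ d with d ∈ P. Define, for each object c, K(c) to be the set of sieves R on c such that the union Z(c) ∪ R is J-covering. Then K is a Grothendieck topology on C and J ≤ K (every J-covering sieve is K-covering). -/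
open CategoryTheory

/-- For a class of objects `P` closed under the existence of morphisms into it, `Z(c)` is the
sieve on `c` of all morphisms whose domain belongs to `P`. -/
def domainSieve {C : Type u} [Category.{v} C] (P : C → Prop)
    (hP : ∀ (e d : C), (e ⟶ d) → P d → P e) (c : C) : Sieve c where
  arrows d _ := P d
  downward_closed := fun hf g => hP _ _ g hf

lemma pullback_sup' {C : Type u} [Category.{v} C] {c d : C} (f : d ⟶ c) (S R : Sieve c) :
    (S ⊔ R).pullback f = S.pullback f ⊔ R.pullback f := by
  ext g
  rfl

lemma domainSieve_pullback {C : Type u} [Category.{v} C] (P : C → Prop)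
    (hP : ∀ (e d : C), (e ⟶ d) → P d → P e) {c d : C} (f : d ⟶ c) :
    (domainSieve P hP c).pullback f = domainSieve P hP d := rfl

/-- Given a Grothendieck topology `J` and a class of objects `P` closed under the existence of
morphisms into it, the assignment `K(c) = {R | Z(c) ∪ R ∈ J(c)}` is a Grothendieck topology
containing `J`. -/
theorem closed_topology_is_grothendieck_topology
    {C : Type u} [Category.{v} C] (J : GrothendieckTopology C) (P : C → Prop)
    (hP : ∀ (e d : C), (e ⟶ d) → P d → P e) :
    ∃ K : GrothendieckTopology C,
      (∀ (c : C) (R : Sieve c), R ∈ K c ↔ domainSieve P hP c ⊔ R ∈ J c) ∧ J ≤ K := by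
  refine ⟨{
    sieves := fun c => {R | domainSieve P hP c ⊔ R ∈ J c}
    top_mem' := fun c => by simpa using J.top_mem c
    pullback_stable' := fun c d R f hR => by
      have := J.pullback_stable f hR
      rwa [pullback_sup', domainSieve_pullback] at this
    transitive' := fun c R hR S hS => by
      refine J.transitive hR _ (fun {d} f hf => ?_)
      rw [pullback_sup', domainSieve_pullback]
      rcases hf with hf | hf
      · have hZ : domainSieve P hP d = ⊤ := by
          ext e g
          exact ⟨fun _ => trivial, fun _ => hP _ _ g hf⟩
        rw [hZ]
        simpa using J.top_mem d
      · exact hS hf }, fun c R => Iff.rfl, ?_⟩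
  intro c R hR
  exact J.superset_covering le_sup_right hR
end

section
/- Let C be a category and P a class of objects of C such that e ∈ P whenever there exists some morphism e ⟶ d with d ∈ P. Define, for each object c, Q(c) to be the set of sieves R on c such that for every arrow f : d ⟶ c, if f*(R) ≤ Z(d) then d ∈ P. Then Q is a Grothendieck topology on C (the quasi-closed topology associated to P; for P = ∅ it is the dense topology, whose covering sieves are the stably non-empty ones). -/
open CategoryTheory

/-- Given a class of objects `P` closed under the existence of morphisms into it, the
assignment `Q(c) = {R | ∀ f : d ⟶ c, f*(R) ≤ Z(d) → d ∈ P}` (the quasi-closed topology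
associated to `P`) is a Grothendieck topology. -/
theorem quasiClosed_is_grothendieck_topology
    {C : Type u} [Category.{v} C] (P : C → Prop)
    (hP : ∀ (e d : C), (e ⟶ d) → P d → P e) :
    ∃ Q : GrothendieckTopology C,
      ∀ (c : C) (R : Sieve c),
        R ∈ Q c ↔ ∀ (d : C) (f : d ⟶ c), R.pullback f ≤ domainSieve P hP d → P d := by
  refine ⟨⟨fun c => {R | ∀ (d : C) (f : d ⟶ c), R.pullback f ≤ domainSieve P hP d → P d},
    ?_, ?_, ?_⟩, fun c R => Iff.rfl⟩
  · intro c d f h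
    exact h (𝟙 d) (by simp [Sieve.pullback_apply])
  · intro c d S f hS e g h
    rw [← Sieve.pullback_comp] at h
    exact hS e (g ≫ f) h
  · intro c S hS R hR d f h
    refine hS d f (fun e g hg => ?_)
    have h1 := hR hg e (𝟙 e)
    rw [Sieve.pullback_id] at h1
    refine h1 ?_
    rw [Sieve.pullback_comp]
    intro x k hk
    rw [Sieve.pullback_apply] at hk
    exact h (k ≫ g) hk
end

section
/- Let C be a category and let 𝒟 be a class of presheaves F : Cᵒᵖ ⥤ Type such that each F ∈ 𝒟 is flat, i.e., the category of elements of F — with objects the pairs (c, x) where x ∈ F(c), and morphisms (c, x) ⟶ (d, y) the arrows g : c ⟶ d of C with F(g)(y) = x — is filtered. For each object c, define H(𝒟)(c) to be the set of sieves S on c in Cᵒᵖ (equivalently, cosieves on c in C) such that for every F ∈ 𝒟 and every x ∈ F(c) there exist an arrow f : c ⟶ d of C belonging to S and an element y ∈ F(d) with F(f)(y) = x. Then H(𝒟) is a Grothendieck topology on Cᵒᵖ. -/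
open CategoryTheory

/-- Let `𝒟` be a class of flat presheaves on `C` (presheaves whose category of elements, with
objects `(c, x)` for `x ∈ F(c)` and morphisms `(c, x) ⟶ (d, y)` the arrows `g : c ⟶ d` of `C`
with `F(g)(y) = x`, is filtered; this category is the opposite of Mathlib's category of
elements of `F`). Then the assignment sending an object `c` to the set of sieves `S` on `c`
in `Cᵒᵖ` (cosieves on `c` in `C`) such that for every `F ∈ 𝒟` and `x ∈ F(c)` there exist
`f : d ⟶ c` in `Cᵒᵖ` belonging to `S` and `y ∈ F(d)` with `F(f)(y) = x`, is a Grothendieck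
topology on `Cᵒᵖ`. -/
theorem galois_cotopology_is_grothendieck_topology
    {C : Type u} [Category.{v} C] (𝒟 : Set (Cᵒᵖ ⥤ Type w))
    (h𝒟 : ∀ F ∈ 𝒟, IsFiltered F.Elementsᵒᵖ) :
    ∃ K : GrothendieckTopology Cᵒᵖ,
      ∀ (c : Cᵒᵖ) (S : Sieve c),
        S ∈ K c ↔
          ∀ F ∈ 𝒟, ∀ x : F.obj c,
            ∃ (d : Cᵒᵖ) (f : d ⟶ c), S.arrows f ∧ ∃ y : F.obj d, F.map f y = x := by
  refine ⟨⟨fun c => {S | ∀ F ∈ 𝒟, ∀ x : F.obj c,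
      ∃ (d : Cᵒᵖ) (f : d ⟶ c), S.arrows f ∧ ∃ y : F.obj d, F.map f y = x}, ?_, ?_, ?_⟩,
    fun c S => Iff.rfl⟩
  · -- top
    intro c F _ x
    exact ⟨c, 𝟙 c, trivial, x, by simp⟩
  · -- pullback stability
    intro c d S g hS F hF x
    haveI := h𝒟 F hF
    haveI : IsCofiltered F.Elements := isCofiltered_of_isFiltered_op _
    obtain ⟨e, h, hhS, y, hy⟩ := hS F hF (F.map g x)
    -- in F.Elements: g : (d, x) ⟶ (c, F.map g x), h : (e, y) ⟶ (c, F.map g x)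
    obtain ⟨W, p, q, hpq⟩ := IsCofiltered.cospan
      (CategoryOfElements.homMk (F.elementsMk d x) (F.elementsMk c (F.map g x)) g rfl)
      (CategoryOfElements.homMk (F.elementsMk e y) (F.elementsMk c (F.map g x)) h hy)
    refine ⟨W.1, p.1, ?_, W.2, p.2⟩
    have : p.1 ≫ g = q.1 ≫ h := congrArg Subtype.val hpq
    show S.arrows (p.1 ≫ g)
    rw [this]
    exact S.downward_closed hhS q.1
  · -- transitivity
    intro c S hS R hR F hF x
    obtain ⟨d, f, hfS, y, hy⟩ := hS F hF x
    obtain ⟨e, g, hgR, z, hz⟩ := hR hfS F hF y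
    exact ⟨e, g ≫ f, hgR, z, by rw [FunctorToTypes.map_comp_apply, hz, hy]⟩
end

section
/- Let C be a category, J a Grothendieck topology on C, and P a class of objects of C such that (a) e ∈ P whenever there exists some morphism e ⟶ d with d ∈ P, and (b) c ∈ P whenever the sieve Z(c) is J-covering (P is a J-ideal). Let U : Cᵒᵖ ⥤ Type be the presheaf with U(c) a one-element set if c ∈ P and U(c) empty otherwise (with the evident restriction maps, well defined by (a)), let C' be the full subcategory of C on the objects in P, and let J' be the Grothendieck topology on C' given by J'(c) = J(c) for c ∈ P (well defined since, by (a), every morphism into an object of P has domain in P, so sieves on c in C' coincide with sieves on c in C). Then U is a J-sheaf, and the slice category of the category of J-sheaves over U is equivalent to the category of J'-sheaves on C': Sh(C, J)/U ≃ Sh(C', J'). -/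
/-!
A presheaf over `U` vanishes outside `P`, so it is determined by its restriction to `C'`:
restriction along `ι : C' ⥤ C` and extension by the empty set outside `P` give
`PSh(C)/U ≌ PSh(C')`. It remains to see that sheaves correspond. As `P` is downward closed,
`ι` preserves covers and compatible families, hence is continuous, so restriction preserves
sheaves. Conversely, a family of elements of an extension by empty on a `J`-covering sieve `S`
of `X` shows `S ≤ Z(X)`, so `X ∈ P` as `P` is a `J`-ideal; then `S` is the image of a
`J'`-covering sieve of `X` in `C'`, where the sheaf condition applies. The same argument shows
that `U` is a sheaf.
-/

open CategoryTheory CategoryTheory.Limits Opposite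

/-- The subterminal presheaf associated to a class of objects `P` closed under the existence
of morphisms into it: its value at `c` is a one-element set if `c ∈ P` and empty otherwise. -/
def idealPresheaf {C : Type u} [Category.{v} C] (P : C → Prop)
    (hP : ∀ (e d : C), (e ⟶ d) → P d → P e) : Cᵒᵖ ⥤ Type where
  obj c := PLift (P c.unop)
  map f := TypeCat.ofHom fun x => ⟨hP _ _ f.unop x.down⟩

section ExtendByEmpty

variable {C : Type u} [Category.{v} C] {P : C → Prop}
  (hP : ∀ (e d : C), (e ⟶ d) → P d → P e)

def extendByEmpty : ((ObjectProperty.FullSubcategory P)ᵒᵖ ⥤ Type) ⥤ (Cᵒᵖ ⥤ Type) where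
  obj G :=
    { obj c := (h : PLift (P c.unop)) × G.obj (op ⟨c.unop, h.down⟩)
      map f := TypeCat.ofHom fun x =>
        ⟨⟨hP _ _ f.unop x.1.down⟩, G.map (ObjectProperty.homMk f.unop).op x.2⟩
      map_id _ := ConcreteCategory.hom_ext _ _ fun ⟨_, y⟩ =>
        congrArg (Sigma.mk _) (G.map_id_apply _ y)
      map_comp f g := ConcreteCategory.hom_ext _ _ fun ⟨_, y⟩ =>
        congrArg (Sigma.mk _) (G.map_comp_apply
          (ObjectProperty.homMk (X := ⟨_, _⟩) (Y := ⟨_, _⟩) f.unop).op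
          (ObjectProperty.homMk (X := ⟨_, _⟩) (Y := ⟨_, _⟩) g.unop).op y) }
  map α :=
    { app _ := TypeCat.ofHom fun x => ⟨x.1, α.app _ x.2⟩
      naturality _ _ _ := ConcreteCategory.hom_ext _ _ fun ⟨_, y⟩ =>
        congrArg (Sigma.mk _) (NatTrans.naturality_apply α _ y) }

instance (c : Cᵒᵖ) : Subsingleton ((idealPresheaf P hP).obj c) :=
  inferInstanceAs (Subsingleton (PLift _))

instance (F : Cᵒᵖ ⥤ Type) : Subsingleton (F ⟶ idealPresheaf P hP) :=
  ⟨fun _ _ => by ext; exact Subsingleton.elim _ _⟩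

def extendByEmptyToIdealPresheaf (G : (ObjectProperty.FullSubcategory P)ᵒᵖ ⥤ Type) :
    (extendByEmpty hP).obj G ⟶ idealPresheaf P hP where
  app _ := TypeCat.ofHom Sigma.fst

def restrictExtendByEmptyIso (G : (ObjectProperty.FullSubcategory P)ᵒᵖ ⥤ Type) :
    (ObjectProperty.ι P).op ⋙ (extendByEmpty hP).obj G ≅ G :=
  NatIso.ofComponents fun c => Equiv.toIso
    { toFun x := x.2
      invFun y := ⟨⟨c.unop.property⟩, y⟩ }

variable {hP} in
def isoExtendByEmptyRestrict {F : Cᵒᵖ ⥤ Type} (p : F ⟶ idealPresheaf P hP) :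
    F ≅ (extendByEmpty hP).obj ((ObjectProperty.ι P).op ⋙ F) :=
  NatIso.ofComponents fun c => Equiv.toIso
    { toFun x := ⟨p.app c x, x⟩
      invFun y := y.2
      right_inv := fun ⟨⟨_⟩, _⟩ => rfl }

def overIdealPresheafEquiv :
    Over (idealPresheaf P hP) ≌ ((ObjectProperty.FullSubcategory P)ᵒᵖ ⥤ Type) where
  functor := Over.forget _ ⋙ (Functor.whiskeringLeft _ _ Type).obj (ObjectProperty.ι P).op
  inverse := (extendByEmpty hP).toOver _ (extendByEmptyToIdealPresheaf hP)
    fun _ => Subsingleton.elim _ _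
  unitIso := NatIso.ofComponents
    (fun F => Over.isoMk (isoExtendByEmptyRestrict F.hom) (Subsingleton.elim _ _))
    fun _ => by ext; exact Sigma.ext (Subsingleton.elim _ _) HEq.rfl
  counitIso := NatIso.ofComponents (restrictExtendByEmptyIso hP)

end ExtendByEmpty

namespace CategoryTheory.ObjectProperty

variable {C : Type u} [Category.{v} C] {P : C → Prop}

theorem functorPushforward_functorPullback_ι (hP : ∀ (e d : C), (e ⟶ d) → P d → P e)
    {X : FullSubcategory P} (S : Sieve X.obj) :
    (S.functorPullback (ι P)).functorPushforward (ι P) = S := by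
  refine le_antisymm (Sieve.functorPullback_pushforward_le (ι P) S) fun Y f hf => ?_
  exact ⟨⟨Y, hP _ _ f X.property⟩, homMk f, 𝟙 Y, hf, (Category.id_comp f).symm⟩

theorem isContinuous_ι (hP : ∀ (e d : C), (e ⟶ d) → P d → P e) {J : GrothendieckTopology C}
    {J' : GrothendieckTopology (FullSubcategory P)}
    (hJ' : ∀ c S, S ∈ J' c → S.functorPushforward (ι P) ∈ J c.obj) :
    (ι P).IsContinuous J' J :=
  Functor.isContinuous_of_coverPreserving
    (compatiblePreservingOfDownwardsClosed _ _ fun {c d} f =>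
      ⟨⟨d, hP _ _ f c.property⟩, Iso.refl _⟩)
    ⟨hJ' _ _⟩

end CategoryTheory.ObjectProperty

section Sheaf

variable {C : Type u} [Category.{v} C] {J : GrothendieckTopology C} {P : C → Prop}
  {hP : ∀ (e d : C), (e ⟶ d) → P d → P e}
  {J' : GrothendieckTopology (ObjectProperty.FullSubcategory P)}

theorem prop_of_le_domainSieve (hIdeal : ∀ c : C, domainSieve P hP c ∈ J c → P c)
    {X : C} {S : Sieve X} (hS : S ∈ J X) (hSP : S ≤ domainSieve P hP X) : P X :=
  hIdeal X (J.superset_covering hSP hS)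

theorem isSheaf_idealPresheaf (hIdeal : ∀ c : C, domainSieve P hP c ∈ J c → P c) :
    Presheaf.IsSheaf J (idealPresheaf P hP) := by
  rw [isSheaf_iff_isSheaf_of_type]
  intro X S hS x _
  have hX : P X := prop_of_le_domainSieve hIdeal hS fun _ f hf => (x f hf).down
  exact ⟨⟨hX⟩, fun _ _ _ => Subsingleton.elim _ _, fun _ _ => Subsingleton.elim _ _⟩

theorem isSheaf_extendByEmpty (hIdeal : ∀ c : C, domainSieve P hP c ∈ J c → P c)
    (hJ' : ∀ c S, S.functorPushforward (ObjectProperty.ι P) ∈ J c.obj → S ∈ J' c)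
    {G : (ObjectProperty.FullSubcategory P)ᵒᵖ ⥤ Type} (hG : Presheaf.IsSheaf J' G) :
    Presheaf.IsSheaf J ((extendByEmpty hP).obj G) := by
  rw [isSheaf_iff_isSheaf_of_type] at hG ⊢
  intro X S hS x hx
  have hX : P X := prop_of_le_domainSieve hIdeal hS fun _ f hf => (x f hf).1.down
  let X' : ObjectProperty.FullSubcategory P := ⟨X, hX⟩
  let S' : Sieve X' := S.functorPullback (X := X') (ObjectProperty.ι P)
  have hS' : S' ∈ J' X' :=
    hJ' X' _ (by rwa [ObjectProperty.functorPushforward_functorPullback_ι hP])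
  let x' : Presieve.FamilyOfElements G S'.arrows := fun _ f hf => (x f.hom hf).2
  have hx' : x'.Compatible := fun _ _ _ g₁ g₂ _ _ h₁ h₂ w => eq_of_heq
    (Sigma.ext_iff.1 (hx g₁.hom g₂.hom h₁ h₂ (congrArg InducedCategory.Hom.hom w))).2
  obtain ⟨t, ht, ht_unique⟩ := hG _ hS' x' hx'
  refine ⟨⟨⟨hX⟩, t⟩, fun Y f hf => ?_, fun t' ht' => ?_⟩
  · exact Sigma.ext rfl (heq_of_eq
      (ht (ObjectProperty.homMk (X := ⟨Y, (x f hf).1.down⟩) (Y := X') f) hf))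
  · exact Sigma.ext rfl (heq_of_eq
      (ht_unique t'.2 fun _ f hf => eq_of_heq (Sigma.ext_iff.1 (ht' f.hom hf)).2))

def overIdealSheafToSheaf (hU : Presheaf.IsSheaf J (idealPresheaf P hP))
    (hJ' : ∀ c S, S ∈ J' c → S.functorPushforward (ObjectProperty.ι P) ∈ J c.obj) :
    Over (⟨idealPresheaf P hP, hU⟩ : Sheaf J Type) ⥤ Sheaf J' Type :=
  ObjectProperty.lift _
    (Over.post (X := (⟨idealPresheaf P hP, hU⟩ : Sheaf J Type)) (sheafToPresheaf J Type) ⋙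
      (overIdealPresheafEquiv hP).functor)
    fun F =>
      have := ObjectProperty.isContinuous_ι hP hJ'
      (ObjectProperty.ι P).op_comp_isSheaf_of_isSheaf J' J F.left.obj F.left.property

noncomputable def overIdealSheafEquiv (hIdeal : ∀ c : C, domainSieve P hP c ∈ J c → P c)
    (hJ' : ∀ c S, S ∈ J' c ↔ S.functorPushforward (ObjectProperty.ι P) ∈ J c.obj) :
    Over (⟨idealPresheaf P hP, isSheaf_idealPresheaf hIdeal⟩ : Sheaf J Type) ≌
      Sheaf J' Type :=
  let Φ := overIdealSheafToSheaf (isSheaf_idealPresheaf hIdeal) fun c S => (hJ' c S).1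
  have : Φ.IsEquivalence :=
    -- named explicitly: instance search does not see `Sheaf J' Type` as the full subcategory
    { full := ObjectProperty.instFullFullSubcategoryLift _ _ _
      faithful := ObjectProperty.instFaithfulFullSubcategoryLift _ _ _
      essSurj.mem_essImage G :=
        ⟨Over.mk (Y := ⟨_, isSheaf_extendByEmpty hIdeal (fun c S => (hJ' c S).2) G.property⟩)
          (ObjectProperty.homMk (extendByEmptyToIdealPresheaf hP G.obj)),
          ⟨ObjectProperty.isoMk _ ((overIdealPresheafEquiv hP).counitIso.app G.obj)⟩⟩ }
  Φ.asEquivalence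

end Sheaf

/-- Let `P` be a `J`-ideal (a class of objects closed under the existence of morphisms into
it, and containing every `c` such that `Z(c)` is `J`-covering), let `U` be the associated
subterminal presheaf, let `C'` be the full subcategory on `P`, and let `J'` be the
Grothendieck topology on `C'` given by `J'(c) = J(c)` (under the identification of sieves in
`C'` with sieves in `C`). Then `U` is a `J`-sheaf and `Sh(C, J)/U ≃ Sh(C', J')`. -/
theorem slice_of_sheaves_over_ideal_presheaf
    {C : Type u} [Category.{v} C] (J : GrothendieckTopology C) (P : C → Prop)
    (hP : ∀ (e d : C), (e ⟶ d) → P d → P e)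
    (hIdeal : ∀ c : C, domainSieve P hP c ∈ J c → P c)
    (J' : GrothendieckTopology (ObjectProperty.FullSubcategory P))
    (hJ' : ∀ (c : ObjectProperty.FullSubcategory P) (S : Sieve c),
      S ∈ J' c ↔ S.functorPushforward (ObjectProperty.ι P) ∈ J c.obj) :
    ∃ hU : Presheaf.IsSheaf J (idealPresheaf P hP),
      Nonempty
        (Over (⟨idealPresheaf P hP, hU⟩ : Sheaf J (Type 0)) ≌ Sheaf J' (Type 0)) :=
  ⟨isSheaf_idealPresheaf hIdeal, ⟨overIdealSheafEquiv hIdeal hJ'⟩⟩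
end
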